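/- Let n ≥ 2 and let w_0, ..., w_{n-1} be real arc weights on the directed cycle on n vertices with total weight w = Σ_i w_i nonzero. Let W be the weighted distance matrix as above, and let β be the vector with β_i = w_i / w. Then W β = λ j, where λ = w^{(2)}/w and w^{(2)} = Σ_{0 ≤ i < j ≤ n-1} w_i w_j. -/

import Mathlib

open Matrix
open Fin.NatCast

private lemma swapIioIoi {n : ℕ} (g : Fin n → Fin n → ℝ) :
    ∑ a, ∑ b ∈ Finset.Iio a, g a b = ∑ b, ∑ a ∈ Finset.Ioi b, g a b := by
  rw [Finset.sum_comm' (t' := Finset.univ) (s' := fun b => Finset.Ioi b)]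
  intro a b
  simp [Finset.mem_Iio, Finset.mem_Ioi]

private lemma helperB {n : ℕ} (g : Fin n → ℝ) :
    2 * (∑ a, ∑ b ∈ Finset.Ioi a, g a * g b) = (∑ a, g a)^2 - ∑ a, (g a)^2 := by
  have hsq : (∑ a, g a)^2 = ∑ a, ∑ b, g a * g b := by
    rw [sq, Finset.sum_mul_sum]
  have hsplit : ∀ a : Fin n, ∑ b, g a * g b =
      (∑ b ∈ Finset.Ioi a, g a * g b) + (∑ b ∈ Finset.Iio a, g a * g b) + g a * g a := by
    intro a
    rw [← Finset.sum_compl_add_sum {a} (fun b => g a * g b), Finset.sum_singleton]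
    congr 1
    rw [← Finset.sum_disjUnion (Finset.disjoint_Ioi_Iio a), Finset.Ioi_disjUnion_Iio]
  have hswap : ∑ a, ∑ b ∈ Finset.Iio a, g a * g b = ∑ a, ∑ b ∈ Finset.Ioi a, g a * g b := by
    rw [swapIioIoi (fun a b => g a * g b)]
    exact Finset.sum_congr rfl fun b _ => Finset.sum_congr rfl fun a _ => mul_comm _ _
  simp_rw [hsq, hsplit, Finset.sum_add_distrib, hswap, ← sq]
  ring

private lemma rangeIio {n : ℕ} [NeZero n] (m : Fin n) (f : Fin n → ℝ) :
    ∑ k ∈ Finset.range (m : ℕ), f (k : Fin n) = ∑ k ∈ Finset.Iio m, f k := by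
  rw [← Nat.Iio_eq_range, ← Fin.map_valEmbedding_Iio, Finset.sum_map]
  exact Finset.sum_congr rfl fun a _ => by simp [Fin.cast_val_eq_self]

theorem stmt_9 {n : ℕ} [NeZero n] (hn : 2 ≤ n) (w : Fin n → ℝ)
    (hw : (∑ i, w i) ≠ 0)
    (W : Matrix (Fin n) (Fin n) ℝ)
    (hW : W = Matrix.of fun i j => ∑ k ∈ Finset.range ((j - i : Fin n) : ℕ), w (i + (k : Fin n)))
    (β : Fin n → ℝ) (hβ : β = fun i => w i / (∑ i, w i)) :
    W.mulVec β = fun _ => (∑ i, ∑ j ∈ Finset.Ioi i, w i * w j) / (∑ i, w i) := by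
  subst hW hβ
  funext i
  simp only [Matrix.mulVec, dotProduct, Matrix.of_apply]
  have key : ∑ j, (∑ k ∈ Finset.range ((j - i : Fin n) : ℕ), w (i + (k : Fin n))) * w j
      = ∑ a, ∑ b ∈ Finset.Ioi a, w a * w b := by
    set y : Fin n → ℝ := fun t => w (i + t) with hy
    have h1 : ∑ j, (∑ k ∈ Finset.range ((j - i : Fin n) : ℕ), w (i + (k : Fin n))) * w j
        = ∑ m, ∑ k ∈ Finset.Iio m, y k * y m := by
      rw [← Fintype.sum_equiv (Equiv.addLeft i)
        (fun m => (∑ k ∈ Finset.Iio m, y k * y m)) _ ?_]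
      intro m
      have : ((i + m : Fin n) - i) = m := add_sub_cancel_left i m
      simp only [Equiv.coe_addLeft, this]
      rw [← Finset.sum_mul, rangeIio m y]
    have h2 : ∑ m, ∑ k ∈ Finset.Iio m, y k * y m = ∑ a, ∑ b ∈ Finset.Ioi a, y a * y b := by
      rw [swapIioIoi (fun m k => y k * y m)]
    have hsum : ∑ t, y t = ∑ t, w t :=
      Fintype.sum_equiv (Equiv.addLeft i) _ _ (fun t => rfl)
    have hsq : ∑ t, (y t)^2 = ∑ t, (w t)^2 :=
      Fintype.sum_equiv (Equiv.addLeft i) _ _ (fun t => rfl)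
    have e1 := helperB y
    have e2 := helperB w
    rw [hsum, hsq, ← e2] at e1
    have := mul_left_cancel₀ (two_ne_zero (α := ℝ)) e1
    rw [h1, h2, this]
  calc ∑ j, (∑ k ∈ Finset.range ((j - i : Fin n) : ℕ), w (i + (k : Fin n))) * (w j / ∑ t, w t)
      = (∑ j, (∑ k ∈ Finset.range ((j - i : Fin n) : ℕ), w (i + (k : Fin n))) * w j) / ∑ t, w t := by
        rw [Finset.sum_div]; exact Finset.sum_congr rfl fun j _ => by ring
    _ = _ := by rw [key]
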